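/- For a differential-drive robot with wheel-speed bound w_max > 0 and half-axle length ρ > 0, starting from any configuration g = (p, θ₀) ∈ ℝ² × ℝ, the area of the small-time reachable set satisfies liminf_{t→0⁺} Area(R_t(g)) / t³ ≥ 2 w_max³ / (3ρ). -/

import Mathlib

open MeasureTheory Filter Topology Real

noncomputable section

/-- The plane `ℝ²` with the Euclidean norm. -/
abbrev Plane : Type := EuclideanSpace ℝ (Fin 2)

/-- A differential-drive (DD) trajectory with wheel-speed bound `wmax` and half-axle
length `ρ`: coordinates `x y θ` driven by measurable wheel-speed controls `wl, wr`
bounded by `wmax`, satisfying (in integral form) `x' = (wl+wr)/2 ⬝ cos θ`,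
`y' = (wl+wr)/2 ⬝ sin θ`, `θ' = (wr - wl)/(2ρ)`. -/
def IsDDTraj (wmax ρ : ℝ) (x y θ : ℝ → ℝ) : Prop :=
  ∃ wl wr : ℝ → ℝ, Measurable wl ∧ Measurable wr ∧
    (∀ t, |wl t| ≤ wmax) ∧ (∀ t, |wr t| ≤ wmax) ∧
    (∀ t, x t = x 0 + ∫ s in (0:ℝ)..t, (wl s + wr s) / 2 * Real.cos (θ s)) ∧
    (∀ t, y t = y 0 + ∫ s in (0:ℝ)..t, (wl s + wr s) / 2 * Real.sin (θ s)) ∧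
    (∀ t, θ t = θ 0 + ∫ s in (0:ℝ)..t, (wr s - wl s) / (2 * ρ))

/-- Minimum travel time of a DD robot from configuration `(p, θ₀)` to the point `q`. -/
def tauDD (wmax ρ : ℝ) (p : Plane) (θ₀ : ℝ) (q : Plane) : ℝ :=
  sInf {T : ℝ | 0 ≤ T ∧ ∃ x y θ : ℝ → ℝ, IsDDTraj wmax ρ x y θ ∧
    x 0 = p 0 ∧ y 0 = p 1 ∧ θ 0 = θ₀ ∧ x T = q 0 ∧ y T = q 1}

/-- Reachable set at time `t` of a DD robot starting at configuration `(p, θ₀)`. -/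
def reachDD (wmax ρ : ℝ) (p : Plane) (θ₀ : ℝ) (t : ℝ) : Set Plane :=
  {q | tauDD wmax ρ p θ₀ q ≤ t}

/-!
A robot at `p` with heading `θ₀` can turn in place through `φ` (time `ρ|φ|/w_max`) and then drive
the signed distance `d` (time `|d|/w_max`), so it reaches `p + d (cos (θ₀ + φ), sin (θ₀ + φ))`
within time `t` whenever `ρ|φ| + |d| ≤ c := w_max t`. The parameters with `d > 0` and
`d + ρ|φ| < c` form a petal on which `(d, φ) ↦ p + d (cos (θ₀ + φ), sin (θ₀ + φ))` is injective
with Jacobian `d`, so its image has area `∫₀ᶜ d · 2(c - d)/ρ = c³/(3ρ)`. Driving backwards gives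
the mirror image of this petal through `p`; once `c/ρ ≤ π/2` the two petals lie on opposite sides
of the line through `p` orthogonal to the heading, so `R_t` has area at least `2 c³/(3ρ)`.
-/

open Set intervalIntegral

lemma abs_sign_le_one {α : Type*} [Ring α] [LinearOrder α] [IsStrictOrderedRing α] (x : α) :
    |(SignType.sign x : α)| ≤ 1 := by
  rcases lt_trichotomy x 0 with hx | hx | hx <;> simp [hx]

lemma integral_eq_of_eqOn_Ioo_Ioo {f : ℝ → ℝ} {a s u C D : ℝ} (has : a ≤ s) (hsu : s ≤ u)
    (hC : EqOn f (fun _ => C) (Ioo a s)) (hD : EqOn f (fun _ => D) (Ioo s u)) :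
    ∫ r in a..u, f r = C * (s - a) + D * (u - s) := by
  rw [← uIoo_of_le has] at hC
  rw [← uIoo_of_le hsu] at hD
  rw [← integral_add_adjacent_intervals (intervalIntegrable_const.congr_uIoo hC.symm)
    (intervalIntegrable_const.congr_uIoo hD.symm), integral_congr_uIoo hC, integral_congr_uIoo hD,
    intervalIntegral.integral_const, intervalIntegral.integral_const, smul_eq_mul,
    smul_eq_mul]
  ring

theorem exists_isDDTraj_turn_then_drive {wmax ρ ω v s s' : ℝ} (hρ : ρ ≠ 0)
    (hω : |ω| ≤ wmax) (hv : |v| ≤ wmax) (hs : 0 ≤ s) (hs' : 0 ≤ s') (x₀ y₀ θ₀ : ℝ) :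
    ∃ x y θ : ℝ → ℝ, IsDDTraj wmax ρ x y θ ∧ x 0 = x₀ ∧ y 0 = y₀ ∧ θ 0 = θ₀ ∧
      x (s + s') = x₀ + v * s' * cos (θ₀ + ω * s / ρ) ∧
      y (s + s') = y₀ + v * s' * sin (θ₀ + ω * s / ρ) := by
  set wl : ℝ → ℝ := fun r => if r < s then -ω else v
  set wr : ℝ → ℝ := fun r => if r < s then ω else v
  set θ : ℝ → ℝ := fun u => θ₀ + ∫ r in (0:ℝ)..u, (wr r - wl r) / (2 * ρ)
  have hθ : EqOn θ (fun _ => θ₀ + ω * s / ρ) (Ioo s (s + s')) := by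
    intro u hu
    simp only [θ]
    rw [integral_eq_of_eqOn_Ioo_Ioo hs hu.1.le (C := ω / ρ) (D := 0)]
    · ring
    · intro r hr
      simp only [wl, wr, if_pos hr.2]
      field_simp
      ring
    · intro r hr
      simp [wl, wr, not_lt.2 hr.1.le]
  have hdrive : ∀ g : ℝ → ℝ, ∫ r in (0:ℝ)..s + s', (wl r + wr r) / 2 * g (θ r) =
      v * s' * g (θ₀ + ω * s / ρ) := by
    intro g
    rw [integral_eq_of_eqOn_Ioo_Ioo hs (le_add_of_nonneg_right hs') (C := 0)
      (D := v * g (θ₀ + ω * s / ρ))]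
    · ring
    · intro r hr
      simp [wl, wr, if_pos hr.2]
    · intro r hr
      simp only [wl, wr, if_neg (not_lt.2 hr.1.le), hθ hr]
      ring
  have hmeas (c : ℝ) : Measurable fun r : ℝ => if r < s then c else v :=
    Measurable.ite measurableSet_Iio measurable_const measurable_const
  have hbound (c : ℝ) (hc : |c| ≤ wmax) (r : ℝ) : |(if r < s then c else v)| ≤ wmax := by
    split_ifs
    exacts [hc, hv]
  refine ⟨fun u => x₀ + ∫ r in (0:ℝ)..u, (wl r + wr r) / 2 * cos (θ r),
    fun u => y₀ + ∫ r in (0:ℝ)..u, (wl r + wr r) / 2 * sin (θ r), θ,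
    ⟨wl, wr, hmeas _, hmeas _, hbound (-ω) (by rwa [abs_neg]), hbound ω hω,
      fun _ => by simp, fun _ => by simp, fun _ => by simp [θ]⟩,
    by simp, by simp, by simp [θ], by simp only [hdrive cos], by simp only [hdrive sin]⟩

/-- Where a robot at `p` with heading `θ` arrives after turning in place through the angle `z.2`
and then driving the signed distance `z.1`. -/
def turnDrive (p : ℝ × ℝ) (θ : ℝ) (z : ℝ × ℝ) : ℝ × ℝ :=
  (p.1 + z.1 * cos (θ + z.2), p.2 + z.1 * sin (θ + z.2))

theorem tauDD_le_of_turnDrive {wmax ρ t φ d : ℝ} (hw : 0 < wmax) (hρ : 0 < ρ)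
    (h : ρ * |φ| + |d| ≤ wmax * t) (p : Plane) (θ₀ : ℝ) {q : Plane}
    (hq : (q 0, q 1) = turnDrive (p 0, p 1) θ₀ (d, φ)) :
    tauDD wmax ρ p θ₀ q ≤ t := by
  have hspeed (x : ℝ) : |wmax * SignType.sign x| ≤ wmax := by
    rw [abs_mul, abs_of_pos hw]
    exact mul_le_of_le_one_right hw.le (abs_sign_le_one x)
  obtain ⟨x, y, θ, hxyθ, hx₀, hy₀, hθ₀, hxT, hyT⟩ :=
    exists_isDDTraj_turn_then_drive hρ.ne' (hspeed φ) (hspeed d)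
      (s := ρ * |φ| / wmax) (s' := |d| / wmax) (by positivity) (by positivity) (p 0) (p 1) θ₀
  have hturn : wmax * SignType.sign φ * (ρ * |φ| / wmax) / ρ = φ := by
    field_simp
    rw [sign_mul_abs]
  have hdrive : wmax * SignType.sign d * (|d| / wmax) = d := by
    field_simp
    rw [sign_mul_abs]
  simp only [turnDrive, Prod.mk.injEq] at hq
  unfold tauDD
  refine csInf_le_of_le (b := ρ * |φ| / wmax + |d| / wmax) ⟨0, fun _ hT => hT.1⟩
    ⟨by positivity, x, y, θ, hxyθ, hx₀, hy₀, hθ₀, ?_, ?_⟩ ?_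
  · rw [hxT, hturn, hdrive, hq.1]
  · rw [hyT, hturn, hdrive, hq.2]
  · rw [← add_div, div_le_iff₀ hw]
    linarith

lemma turnDrive_add_pi (p : ℝ × ℝ) (θ : ℝ) (z : ℝ × ℝ) :
    turnDrive p (θ + π) z = turnDrive p θ (-z.1, z.2) := by
  simp only [turnDrive, add_right_comm θ π, cos_add_pi, sin_add_pi, mul_neg, neg_mul]

lemma hasFDerivAt_turnDrive (p : ℝ × ℝ) (θ : ℝ) (z : ℝ × ℝ) :
    HasFDerivAt (turnDrive p θ) (fderivPolarCoordSymm (z + (0, θ))) z := by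
  have hpolar : turnDrive p θ = fun z => p + polarCoord.symm (z + (0, θ)) := by
    ext z <;> simp [turnDrive, add_comm θ]
  rw [hpolar]
  have := ((hasFDerivAt_polarCoord_symm (z + (0, θ))).comp z
    ((hasFDerivAt_id z).add_const (0, θ))).const_add p
  rwa [ContinuousLinearMap.comp_id] at this

lemma injOn_turnDrive (p : ℝ × ℝ) (θ : ℝ) :
    InjOn (turnDrive p θ) {z | 0 < z.1 ∧ |z.2| < π} := by
  rintro ⟨d, φ⟩ ⟨hd, hφ⟩ ⟨d', φ'⟩ ⟨hd', hφ'⟩ h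
  simp only [turnDrive, Prod.mk.injEq, add_right_inj] at h hd hφ hd' hφ'
  obtain ⟨hcos, hsin⟩ := h
  have hdd : d = d' := by
    have hsq : d ^ 2 = d' ^ 2 := by
      linear_combination (d * cos (θ + φ) + d' * cos (θ + φ')) * hcos
        + (d * sin (θ + φ) + d' * sin (θ + φ')) * hsin
        - d ^ 2 * sin_sq_add_cos_sq (θ + φ) + d' ^ 2 * sin_sq_add_cos_sq (θ + φ')
    exact (pow_left_inj₀ hd.le hd'.le two_ne_zero).1 hsq
  subst hdd
  have hcos1 : cos (φ - φ') = 1 := by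
    have hc := mul_left_cancel₀ hd.ne' hcos
    have hs := mul_left_cancel₀ hd.ne' hsin
    rw [← add_sub_add_left_eq_sub φ φ' θ, cos_sub, ← hc, ← hs, ← sq, ← sq,
      cos_sq_add_sin_sq]
  have := (cos_eq_one_iff_of_lt_of_lt (by linarith [abs_lt.1 hφ, abs_lt.1 hφ'])
    (by linarith [abs_lt.1 hφ, abs_lt.1 hφ'])).1 hcos1
  simp only [Prod.mk.injEq, true_and]
  linarith

lemma measurableSet_image_turnDrive {A : Set (ℝ × ℝ)} (hA : MeasurableSet A)
    (hA' : A ⊆ {z | 0 < z.1 ∧ |z.2| < π}) (p : ℝ × ℝ) (θ : ℝ) :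
    MeasurableSet (turnDrive p θ '' A) :=
  measurable_image_of_fderivWithin hA
    (fun z _ => (hasFDerivAt_turnDrive p θ z).hasFDerivWithinAt) ((injOn_turnDrive p θ).mono hA')

lemma volume_image_turnDrive {A : Set (ℝ × ℝ)} (hA : MeasurableSet A)
    (hA' : A ⊆ {z | 0 < z.1 ∧ |z.2| < π}) (p : ℝ × ℝ) (θ : ℝ) :
    volume (turnDrive p θ '' A) = ∫⁻ z in A, ENNReal.ofReal z.1 := by
  rw [← setLIntegral_one, lintegral_image_eq_lintegral_abs_det_fderiv_mul volume hA
    (fun z _ => (hasFDerivAt_turnDrive p θ z).hasFDerivWithinAt) ((injOn_turnDrive p θ).mono hA')]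
  refine setLIntegral_congr_fun hA fun z hz => ?_
  rw [det_fderivPolarCoordSymm, Prod.fst_add, add_zero, abs_of_pos (hA' hz).1, mul_one]

lemma disjoint_image_turnDrive_add_pi (p : ℝ × ℝ) (θ : ℝ) {A : Set (ℝ × ℝ)}
    (hA : A ⊆ {z | 0 < z.1 ∧ |z.2| < π / 2}) :
    Disjoint (turnDrive p θ '' A) (turnDrive p (θ + π) '' A) := by
  rw [Set.disjoint_left]
  rintro _ ⟨z, hz, rfl⟩ ⟨w, hw, hwz⟩
  rw [turnDrive_add_pi] at hwz
  simp only [turnDrive, Prod.mk.injEq, add_right_inj] at hwz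
  have hproj : z.1 * cos z.2 = -w.1 * cos w.2 := by
    rw [← add_sub_cancel_left θ z.2, ← add_sub_cancel_left θ w.2, cos_sub, cos_sub]
    linear_combination (-cos θ) * hwz.1 - sin θ * hwz.2
  have hpos (u : ℝ × ℝ) (hu : u ∈ A) : 0 < u.1 * cos u.2 :=
    mul_pos (hA hu).1 (cos_pos_of_mem_Ioo (abs_lt.1 (hA hu).2))
  linarith [hpos z hz, hpos w hw]

def petal (c ρ : ℝ) : Set (ℝ × ℝ) := {z | 0 < z.1 ∧ z.1 + ρ * |z.2| < c}

lemma measurableSet_petal (c ρ : ℝ) : MeasurableSet (petal c ρ) :=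
  (measurableSet_lt measurable_const measurable_fst).inter
    (measurableSet_lt (measurable_fst.add (measurable_const.mul measurable_snd.abs))
      measurable_const)

lemma petal_subset {c ρ : ℝ} (hρ : 0 < ρ) : petal c ρ ⊆ {z | 0 < z.1 ∧ |z.2| < c / ρ} :=
  fun z ⟨hz₁, hz⟩ => ⟨hz₁, by rw [lt_div_iff₀' hρ]; linarith⟩

lemma volume_petal_slice {c ρ d : ℝ} (hρ : 0 < ρ) (hd : 0 < d) :
    volume (Prod.mk d ⁻¹' petal c ρ) = ENNReal.ofReal (2 * (c - d) / ρ) := by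
  have hslice : Prod.mk d ⁻¹' petal c ρ = Ioo (-((c - d) / ρ)) ((c - d) / ρ) := by
    ext φ
    rw [mem_Ioo, ← abs_lt, lt_div_iff₀' hρ]
    simp only [petal, mem_preimage, mem_ofPred_eq, hd, true_and]
    constructor <;> intro h <;> linarith
  rw [hslice, Real.volume_Ioo]
  ring_nf

lemma lintegral_petal {c ρ : ℝ} (hc : 0 ≤ c) (hρ : 0 < ρ) :
    ∫⁻ z in petal c ρ, ENNReal.ofReal z.1 = ENNReal.ofReal (c ^ 3 / (3 * ρ)) := by
  have hslices (d : ℝ) : ∫⁻ φ, (petal c ρ).indicator (fun z => ENNReal.ofReal z.1) (d, φ) =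
      (Ioo 0 c).indicator (fun d => ENNReal.ofReal (d * (2 * (c - d) / ρ))) d := by
    simp_rw [← indicator_comp_right (Prod.mk d)]
    rw [show (fun z : ℝ × ℝ => ENNReal.ofReal z.1) ∘ Prod.mk d = fun _ => ENNReal.ofReal d
        from rfl, lintegral_indicator_const (measurable_prodMk_left (measurableSet_petal c ρ))]
    rcases le_or_gt d 0 with hd | hd
    · rw [ENNReal.ofReal_of_nonpos hd, zero_mul, indicator_of_notMem (fun h => hd.not_gt h.1)]
    · rw [volume_petal_slice hρ hd, ← ENNReal.ofReal_mul hd.le]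
      rcases lt_or_ge d c with hdc | hdc
      · rw [indicator_of_mem (show d ∈ Ioo 0 c from ⟨hd, hdc⟩)]
      · rw [indicator_of_notMem (fun h => hdc.not_gt h.2), ENNReal.ofReal_eq_zero]
        exact mul_nonpos_of_nonneg_of_nonpos hd.le
          (div_nonpos_of_nonpos_of_nonneg (by linarith) hρ.le)
  rw [← lintegral_indicator (measurableSet_petal c ρ), Measure.volume_eq_prod,
    lintegral_prod _
      (measurable_fst.ennreal_ofReal.indicator (measurableSet_petal c ρ)).aemeasurable]
  simp_rw [hslices]
  rw [lintegral_indicator measurableSet_Ioo, ← ofReal_integral_eq_lintegral_ofReal,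
    ← integral_Ioc_eq_integral_Ioo, ← intervalIntegral.integral_of_le hc]
  · have hpoly : (fun d : ℝ => d * (2 * (c - d) / ρ)) = fun d => 2 / ρ * (c * d - d ^ 2) := by
      ext d; ring
    rw [hpoly, intervalIntegral.integral_const_mul, intervalIntegral.integral_sub
      ((continuous_const_mul c).intervalIntegrable _ _) ((continuous_pow 2).intervalIntegrable _ _),
      intervalIntegral.integral_const_mul, integral_id, integral_pow]
    ring_nf
  · exact (Continuous.integrableOn_Icc (by fun_prop)).mono_set Ioo_subset_Icc_self
  · filter_upwards [ae_restrict_mem measurableSet_Ioo] with d hd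
    exact mul_nonneg hd.1.le (div_nonneg (by linarith [hd.2]) hρ.le)

lemma volume_setOf_coords_mem (S : Set (ℝ × ℝ)) :
    volume {q : Plane | (q 0, q 1) ∈ S} = volume S :=
  ((volume_preserving_finTwoArrow ℝ).comp
    (EuclideanSpace.volume_preserving_symm_measurableEquiv_toLp (Fin 2))).measure_preimage_equiv
    (f := (MeasurableEquiv.toLp 2 (Fin 2 → ℝ)).symm.trans MeasurableEquiv.finTwoArrow) S

theorem ofReal_le_volume_reachDD {wmax ρ t : ℝ} (hw : 0 < wmax) (hρ : 0 < ρ) (p : Plane) (θ₀ : ℝ)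
    (ht : 0 ≤ t) (htπ : wmax * t ≤ ρ * (π / 2)) :
    ENNReal.ofReal (2 * (wmax * t) ^ 3 / (3 * ρ)) ≤ volume (reachDD wmax ρ p θ₀ t) := by
  set c := wmax * t
  set P := petal c ρ
  have hP : P ⊆ {z | 0 < z.1 ∧ |z.2| < π / 2} := fun z hz =>
    ⟨hz.1, (petal_subset hρ hz).2.trans_le (by rwa [div_le_iff₀' hρ])⟩
  have hP' : P ⊆ {z | 0 < z.1 ∧ |z.2| < π} := fun z hz =>
    ⟨(hP hz).1, (hP hz).2.trans (by linarith [pi_pos])⟩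
  have hreach : {q : Plane | (q 0, q 1) ∈ turnDrive (p 0, p 1) θ₀ '' P ∪
      turnDrive (p 0, p 1) (θ₀ + π) '' P} ⊆ reachDD wmax ρ p θ₀ t := by
    rintro q (⟨z, ⟨hz₁, hz⟩, hzq⟩ | ⟨z, ⟨hz₁, hz⟩, hzq⟩)
    · exact tauDD_le_of_turnDrive hw hρ (by rw [abs_of_pos hz₁]; linarith) p θ₀ hzq.symm
    · rw [turnDrive_add_pi] at hzq
      exact tauDD_le_of_turnDrive hw hρ (by rw [abs_neg, abs_of_pos hz₁]; linarith) p θ₀ hzq.symm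
  have hP_meas := measurableSet_petal c ρ
  calc ENNReal.ofReal (2 * c ^ 3 / (3 * ρ))
      = ENNReal.ofReal (c ^ 3 / (3 * ρ)) + ENNReal.ofReal (c ^ 3 / (3 * ρ)) := by
        rw [← ENNReal.ofReal_add (by positivity) (by positivity)]
        ring_nf
    _ = volume (turnDrive (p 0, p 1) θ₀ '' P ∪ turnDrive (p 0, p 1) (θ₀ + π) '' P) := by
        rw [measure_union (disjoint_image_turnDrive_add_pi _ _ hP)
            (measurableSet_image_turnDrive hP_meas hP' _ _),
          volume_image_turnDrive hP_meas hP', volume_image_turnDrive hP_meas hP',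
          lintegral_petal (by positivity) hρ]
    _ ≤ volume (reachDD wmax ρ p θ₀ t) := by
        rw [← volume_setOf_coords_mem]
        exact measure_mono hreach

/-- small-time lower bound on the area of the reachable set of a DD robot:
`liminf_{t→0⁺} Area(R_t(g)) / t³ ≥ 2 w_max³ / (3ρ)`. -/
theorem dd_reachable_area_lower_bound
    (wmax ρ : ℝ) (hw : 0 < wmax) (hρ : 0 < ρ) (p : Plane) (θ₀ : ℝ) :
    ENNReal.ofReal (2 * wmax ^ 3 / (3 * ρ)) ≤
      Filter.liminf
        (fun t : ℝ => volume (reachDD wmax ρ p θ₀ t) / ENNReal.ofReal (t ^ 3))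
        (𝓝[>] 0) := by
  refine le_liminf_of_le (by isBoundedDefault) ?_
  filter_upwards [Ioo_mem_nhdsGT (show 0 < ρ * (π / 2) / wmax by positivity)] with t ⟨ht, htπ⟩
  rw [ENNReal.le_div_iff_mul_le (Or.inl (by positivity)) (Or.inl ENNReal.ofReal_ne_top),
    ← ENNReal.ofReal_mul (by positivity)]
  calc ENNReal.ofReal (2 * wmax ^ 3 / (3 * ρ) * t ^ 3)
      = ENNReal.ofReal (2 * (wmax * t) ^ 3 / (3 * ρ)) := by ring_nf
    _ ≤ volume (reachDD wmax ρ p θ₀ t) :=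
        ofReal_le_volume_reachDD hw hρ p θ₀ ht.le (by rw [lt_div_iff₀' hw] at htπ; exact htπ.le)
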